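/- For every b with 0 ≤ b < 1/2 there is a constant C (depending on b and the interval I) such that for every g ∈ L^1(I), the function t ↦ χ_I(t) ∫_0^t g(t') dt' belongs to H^b(ℝ) with norm at most C ‖g‖_{L^1(I)}. -/

import Mathlib

open MeasureTheory
open scoped FourierTransform ENNReal
open Real

/-- The squared Sobolev `H^b(ℝ)` norm, `∫ ⟨τ⟩^{2b} |𝓕 f (τ)|² dτ`. -/
noncomputable def HnormSq (b : ℝ) (f : ℝ → ℂ) : ℝ≥0∞ :=
  ∫⁻ τ : ℝ, ENNReal.ofReal ((1 + τ ^ 2) ^ b * ‖𝓕 f τ‖ ^ 2)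

/- Auxiliary material -/

noncomputable def EE (τ t : ℝ) : ℂ := Complex.exp (↑(-2 * π * t * τ) * Complex.I)

noncomputable def cc (t s : ℝ) : ℂ :=
  (Set.Ioc 0 t).indicator (fun _ => 1) s - (Set.Ioc t 0).indicator (fun _ => 1) s

lemma EE_norm (τ t : ℝ) : ‖EE τ t‖ = 1 := by
  simp [EE, Complex.norm_exp]

lemma EE_meas (τ : ℝ) : Measurable (EE τ) := by
  unfold EE; fun_prop

lemma EE_int_bound1 (τ s r : ℝ) : ‖∫ t in s..r, EE τ t‖ ≤ |r - s| := by
  have := intervalIntegral.norm_integral_le_of_norm_le_const (C := 1) (f := EE τ) (a := s) (b := r)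
    (fun x _ => le_of_eq (EE_norm τ x))
  simpa using this

lemma EE_int_bound2 {τ : ℝ} (hτ : τ ≠ 0) (s r : ℝ) : ‖∫ t in s..r, EE τ t‖ ≤ 1 / (π * |τ|) := by
  have hc : ((-2 * π * τ : ℝ) : ℂ) * Complex.I ≠ 0 := by
    simp [Complex.ext_iff, pi_ne_zero, hτ]
  have heq : ∀ t : ℝ, EE τ t = Complex.exp ((((-2 * π * τ : ℝ) : ℂ) * Complex.I) * t) := by
    intro t; unfold EE; congr 1; push_cast; ring
  rw [intervalIntegral.integral_congr (fun t _ => heq t), integral_exp_mul_complex hc]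
  rw [norm_div]
  have h1 : ∀ x : ℝ, ‖Complex.exp ((((-2 * π * τ : ℝ) : ℂ) * Complex.I) * x)‖ = 1 := by
    intro x; rw [← heq]; exact EE_norm τ x
  have hnum : ‖Complex.exp ((((-2 * π * τ : ℝ) : ℂ) * Complex.I) * r) -
      Complex.exp ((((-2 * π * τ : ℝ) : ℂ) * Complex.I) * s)‖ ≤ 2 := by
    calc _ ≤ _ := norm_sub_le _ _
    _ ≤ 2 := by rw [h1, h1]; norm_num
  have hden : ‖(((-2 * π * τ : ℝ) : ℂ) * Complex.I)‖ = 2 * π * |τ| := by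
    simp [norm_mul, Complex.norm_real, abs_mul, abs_of_nonneg pi_pos.le]
  rw [hden]
  have hpos : (0:ℝ) < π * |τ| := by positivity
  calc _ ≤ 2 / (2 * π * |τ|) := by gcongr
  _ = 1 / (π * |τ|) := by field_simp

lemma cc_meas : Measurable (fun p : ℝ × ℝ => cc p.1 p.2) := by
  have m1 : MeasurableSet {p : ℝ × ℝ | 0 < p.2 ∧ p.2 ≤ p.1} :=
    (measurableSet_lt measurable_const measurable_snd).inter
      (measurableSet_le measurable_snd measurable_fst)
  have m2 : MeasurableSet {p : ℝ × ℝ | p.1 < p.2 ∧ p.2 ≤ 0} :=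
    (measurableSet_lt measurable_fst measurable_snd).inter
      (measurableSet_le measurable_snd measurable_const)
  have : (fun p : ℝ × ℝ => cc p.1 p.2) =
      fun p => Set.indicator {p : ℝ × ℝ | 0 < p.2 ∧ p.2 ≤ p.1} (fun _ => (1:ℂ)) p
        - Set.indicator {p : ℝ × ℝ | p.1 < p.2 ∧ p.2 ≤ 0} (fun _ => (1:ℂ)) p := by
    ext p
    unfold cc
    simp only [Set.indicator_apply, Set.mem_Ioc, Set.mem_setOf_eq]
  rw [this]
  exact (measurable_const.indicator m1).sub (measurable_const.indicator m2)

lemma cc_norm_le (t s : ℝ) : ‖cc t s‖ ≤ 1 := by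
  unfold cc
  rcases le_or_gt t 0 with h | h
  · have : (Set.Ioc 0 t) = ∅ := Set.Ioc_eq_empty (by intro hh; linarith)
    rw [this]
    simp only [Set.indicator_empty, Pi.zero_apply, zero_sub, norm_neg]
    exact norm_indicator_le_norm_self _ s |>.trans (by norm_num)
  · have : (Set.Ioc t 0) = ∅ := Set.Ioc_eq_empty (by intro hh; linarith)
    rw [this]
    simp only [Set.indicator_empty, Pi.zero_apply, sub_zero]
    exact norm_indicator_le_norm_self _ s |>.trans (by norm_num)

lemma G_eq {a d : ℝ} (ha : a < 0) (hd : 0 < d) {g : ℝ → ℂ}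
    (hg : IntegrableOn g (Set.Ioo a d)) {t : ℝ} (ht : t ∈ Set.Ioo a d) :
    (∫ t' in (0:ℝ)..t, g t') = ∫ s in Set.Ioo a d, cc t s * g s := by
  have hmul : ∀ s, cc t s * g s
      = (Set.Ioc 0 t).indicator g s - (Set.Ioc t 0).indicator g s := by
    intro s; unfold cc
    by_cases h1 : s ∈ Set.Ioc 0 t <;> by_cases h2 : s ∈ Set.Ioc t 0 <;>
      simp [h1, h2, Set.indicator_of_mem, Set.indicator_of_notMem]
  simp_rw [hmul]
  have i1 : IntegrableOn ((Set.Ioc 0 t).indicator g) (Set.Ioo a d) :=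
    hg.indicator measurableSet_Ioc
  have i2 : IntegrableOn ((Set.Ioc t 0).indicator g) (Set.Ioo a d) :=
    hg.indicator measurableSet_Ioc
  rw [integral_sub i1 i2, setIntegral_indicator measurableSet_Ioc,
    setIntegral_indicator measurableSet_Ioc]
  have e1 : Set.Ioo a d ∩ Set.Ioc 0 t = Set.Ioc 0 t := by
    apply Set.inter_eq_self_of_subset_right
    intro x hx
    exact ⟨lt_trans ha hx.1, lt_of_le_of_lt hx.2 ht.2⟩
  have e2 : Set.Ioo a d ∩ Set.Ioc t 0 = Set.Ioc t 0 := by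
    apply Set.inter_eq_self_of_subset_right
    intro x hx
    exact ⟨lt_trans ht.1 hx.1, lt_of_le_of_lt hx.2 hd⟩
  rw [e1, e2]
  rcases le_total 0 t with h | h
  · rw [intervalIntegral.integral_of_le h, Set.Ioc_eq_empty (not_lt.2 h)]
    simp
  · rw [intervalIntegral.integral_of_ge h, Set.Ioc_eq_empty (not_lt.2 h)]
    simp

lemma kernel_eq {a d : ℝ} (hd : 0 < d) (τ : ℝ) {s : ℝ} (hs : s ∈ Set.Ioo a d) :
    (∫ t in Set.Ioo a d, EE τ t * cc t s) =
      if 0 < s then ∫ t in s..d, EE τ t else -∫ t in a..s, EE τ t := by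
  split_ifs with h
  · have hfun : ∀ t, EE τ t * cc t s = (Set.Ici s).indicator (EE τ) t := by
      intro t; unfold cc
      by_cases hts : s ≤ t
      · have h1 : s ∈ Set.Ioc 0 t := ⟨h, hts⟩
        have h2 : s ∉ Set.Ioc t 0 := by simp only [Set.mem_Ioc, not_and]; intro _; linarith
        simp [h1, h2, Set.indicator_of_mem (Set.mem_Ici.2 hts)]
      · have h1 : s ∉ Set.Ioc 0 t := by simp only [Set.mem_Ioc, not_and]; intro _; linarith
        have h2 : s ∉ Set.Ioc t 0 := by simp only [Set.mem_Ioc, not_and]; intro _; linarith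
        simp [h1, h2, Set.indicator_of_notMem (by simpa using hts : t ∉ Set.Ici s)]
    simp_rw [hfun]
    rw [setIntegral_indicator measurableSet_Ici]
    have e : Set.Ioo a d ∩ Set.Ici s = Set.Ico s d := by
      ext x
      simp only [Set.mem_inter_iff, Set.mem_Ioo, Set.mem_Ici, Set.mem_Ico]
      constructor
      · rintro ⟨⟨_, h2⟩, h3⟩; exact ⟨h3, h2⟩
      · rintro ⟨h1, h2⟩; exact ⟨⟨lt_of_lt_of_le hs.1 h1, h2⟩, h1⟩
    rw [e, intervalIntegral.integral_of_le hs.2.le,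
      MeasureTheory.Measure.restrict_congr_set MeasureTheory.Ico_ae_eq_Ioc]
  · push_neg at h
    have hfun : ∀ t, EE τ t * cc t s = -(Set.Iio s).indicator (EE τ) t := by
      intro t; unfold cc
      by_cases hts : t < s
      · have h1 : s ∉ Set.Ioc 0 t := by simp only [Set.mem_Ioc, not_and]; intro _; linarith
        have h2 : s ∈ Set.Ioc t 0 := ⟨hts, h⟩
        simp [h1, h2, Set.indicator_of_mem (Set.mem_Iio.2 hts)]
      · have h1 : s ∉ Set.Ioc 0 t := by simp only [Set.mem_Ioc, not_and]; intro _; linarith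
        have h2 : s ∉ Set.Ioc t 0 := by simp only [Set.mem_Ioc, not_and]; intro _; linarith
        simp [h1, h2, Set.indicator_of_notMem (by simpa using hts : t ∉ Set.Iio s)]
    simp_rw [hfun]
    rw [integral_neg, setIntegral_indicator measurableSet_Iio]
    have e : Set.Ioo a d ∩ Set.Iio s = Set.Ioo a s := by
      ext x
      simp only [Set.mem_inter_iff, Set.mem_Ioo, Set.mem_Iio]
      constructor
      · rintro ⟨⟨h1, _⟩, h3⟩; exact ⟨h1, h3⟩
      · rintro ⟨h1, h2⟩; exact ⟨⟨h1, by linarith⟩, h2⟩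
    rw [e, intervalIntegral.integral_of_le hs.1.le,
      MeasureTheory.Measure.restrict_congr_set MeasureTheory.Ioo_ae_eq_Ioc]

lemma fourier_repr {a d : ℝ} (ha : a < 0) (hd : 0 < d) {g : ℝ → ℂ}
    (hg : IntegrableOn g (Set.Ioo a d)) (τ : ℝ) :
    𝓕 (fun t => Set.indicator (Set.Ioo a d) (fun u => ∫ t' in (0:ℝ)..u, g t') t) τ
      = ∫ s in Set.Ioo a d, (∫ t in Set.Ioo a d, EE τ t * cc t s) * g s := by
  rw [Real.fourier_real_eq_integral_exp_smul]
  have step1 : (∫ v : ℝ, Complex.exp (↑(-2 * π * v * τ) * Complex.I) •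
        Set.indicator (Set.Ioo a d) (fun u => ∫ t' in (0:ℝ)..u, g t') v)
      = ∫ t in Set.Ioo a d, EE τ t * (∫ t' in (0:ℝ)..t, g t') := by
    rw [← MeasureTheory.integral_indicator measurableSet_Ioo]
    congr 1
    ext t
    by_cases h : t ∈ Set.Ioo a d <;> simp [h, EE, smul_eq_mul]
  rw [step1]
  have step2 : (∫ t in Set.Ioo a d, EE τ t * (∫ t' in (0:ℝ)..t, g t'))
      = ∫ t in Set.Ioo a d, ∫ s in Set.Ioo a d, EE τ t * cc t s * g s := by
    apply setIntegral_congr_fun measurableSet_Ioo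
    intro t ht
    dsimp only
    rw [G_eq ha hd hg ht, ← MeasureTheory.integral_const_mul]
    congr 1; ext s; ring
  rw [step2]
  have hInt : Integrable (fun p : ℝ × ℝ => EE τ p.1 * cc p.1 p.2 * g p.2)
      ((volume.restrict (Set.Ioo a d)).prod (volume.restrict (Set.Ioo a d))) := by
    have hmeas : AEStronglyMeasurable (fun p : ℝ × ℝ => EE τ p.1 * cc p.1 p.2 * g p.2)
        ((volume.restrict (Set.Ioo a d)).prod (volume.restrict (Set.Ioo a d))) := by
      exact ((((EE_meas τ).comp measurable_fst).mul cc_meas).aestronglyMeasurable.mul (hg.1.comp_quasiMeasurePreserving Measure.quasiMeasurePreserving_snd))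
    have hconst : Integrable (fun _ : ℝ => (1:ℝ)) (volume.restrict (Set.Ioo a d)) := by
      rw [integrable_const_iff]
      right
      exact ⟨by simp [Real.volume_Ioo]⟩
    have hmaj : Integrable (fun p : ℝ × ℝ => (1:ℝ) * ‖g p.2‖)
        ((volume.restrict (Set.Ioo a d)).prod (volume.restrict (Set.Ioo a d))) :=
      hconst.mul_prod hg.norm
    refine hmaj.mono' hmeas (Filter.Eventually.of_forall fun p => ?_)
    calc ‖EE τ p.1 * cc p.1 p.2 * g p.2‖ = ‖EE τ p.1‖ * ‖cc p.1 p.2‖ * ‖g p.2‖ := by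
          simp [norm_mul]
    _ ≤ 1 * 1 * ‖g p.2‖ := by
          gcongr
          · exact le_of_eq (EE_norm τ p.1)
          · exact cc_norm_le _ _
    _ = 1 * ‖g p.2‖ := by ring
  rw [MeasureTheory.integral_integral_swap hInt]
  congr 1
  ext s
  rw [MeasureTheory.integral_mul_const]

lemma fourier_norm_le {a d : ℝ} (ha : a < 0) (hd : 0 < d) {g : ℝ → ℂ}
    (hg : IntegrableOn g (Set.Ioo a d)) (τ : ℝ) (B : ℝ) (hB0 : 0 ≤ B)
    (hB : ∀ u v : ℝ, a ≤ u → u ≤ v → v ≤ d → ‖∫ t in u..v, EE τ t‖ ≤ B) :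
    ‖𝓕 (fun t => Set.indicator (Set.Ioo a d) (fun u => ∫ t' in (0:ℝ)..u, g t') t) τ‖
      ≤ B * ∫ s in Set.Ioo a d, ‖g s‖ := by
  rw [fourier_repr ha hd hg τ]
  calc ‖∫ s in Set.Ioo a d, (∫ t in Set.Ioo a d, EE τ t * cc t s) * g s‖
      ≤ ∫ s in Set.Ioo a d, ‖(∫ t in Set.Ioo a d, EE τ t * cc t s) * g s‖ :=
        norm_integral_le_integral_norm _
  _ ≤ ∫ s in Set.Ioo a d, B * ‖g s‖ := by
      apply integral_mono_of_nonneg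
      · exact Filter.Eventually.of_forall fun s => norm_nonneg _
      · exact hg.norm.const_mul B
      · refine ae_restrict_of_forall_mem measurableSet_Ioo fun s hs => ?_
        dsimp only
        rw [norm_mul]
        have hK : ‖∫ t in Set.Ioo a d, EE τ t * cc t s‖ ≤ B := by
          rw [kernel_eq hd τ hs]
          split_ifs with h
          · exact hB s d hs.1.le (le_of_lt hs.2) le_rfl
          · rw [norm_neg]
            exact hB a s le_rfl hs.1.le (by linarith [hs.2])
        exact mul_le_mul_of_nonneg_right hK (norm_nonneg _)
  _ = B * ∫ s in Set.Ioo a d, ‖g s‖ := MeasureTheory.integral_const_mul B _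

lemma key_aux (b da τ N L : ℝ) (hN0 : 0 ≤ N) (hL0 : 0 ≤ L)
    (h1 : N ≤ da * L) (h2 : τ ≠ 0 → N ≤ 1 / (π * |τ|) * L) :
    (1 + τ ^ 2) ^ b * N ^ 2 ≤ (da ^ 2 + 1 / π ^ 2) * L ^ 2 * (1 + τ ^ 2) ^ (b - 1) := by
  have hx : (0:ℝ) < 1 + τ ^ 2 := by positivity
  have key0 : (1 + τ ^ 2) * N ^ 2 ≤ (da ^ 2 + 1 / π ^ 2) * L ^ 2 := by
    have hA : N ^ 2 ≤ da ^ 2 * L ^ 2 := by nlinarith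
    have hB : τ ^ 2 * N ^ 2 ≤ (1 / π ^ 2) * L ^ 2 := by
      rcases eq_or_ne τ 0 with h | h
      · rw [h]; norm_num; positivity
      · have hbd := h2 h
        have habs : |τ| > 0 := abs_pos.2 h
        have hsq : |τ| ^ 2 = τ ^ 2 := sq_abs τ
        have hsqN : N ^ 2 ≤ (1 / (π * |τ|) * L) ^ 2 := by nlinarith
        calc τ ^ 2 * N ^ 2 ≤ τ ^ 2 * ((1 / (π * |τ|) * L) ^ 2) := by nlinarith
        _ = (1 / π ^ 2) * L ^ 2 := by
            field_simp
            rw [← hsq]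
    nlinarith
  have hrw : (1 + τ ^ 2) ^ b = (1 + τ ^ 2) ^ (b - 1) * (1 + τ ^ 2) := by
    rw [Real.rpow_sub hx, Real.rpow_one]
    field_simp
  rw [hrw, mul_assoc]
  have hrpow : (0:ℝ) ≤ (1 + τ ^ 2) ^ (b - 1) := Real.rpow_nonneg hx.le _
  calc (1 + τ ^ 2) ^ (b - 1) * ((1 + τ ^ 2) * N ^ 2)
      ≤ (1 + τ ^ 2) ^ (b - 1) * ((da ^ 2 + 1 / π ^ 2) * L ^ 2) := by gcongr
  _ = (da ^ 2 + 1 / π ^ 2) * L ^ 2 * (1 + τ ^ 2) ^ (b - 1) := by ring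

/-- For `0 ≤ b < 1/2` and a bounded open interval `I = (a,d)` containing `0`, the sharply
truncated primitive `t ↦ χ_I(t) ∫₀ᵗ g` lies in `H^b` with norm `≤ C ‖g‖_{L¹(I)}`. -/
theorem sharp_cutoff_integration_Hb (b : ℝ) (hb0 : 0 ≤ b) (hb : b < 1 / 2)
    (a d : ℝ) (had : a < d) (h0 : (0 : ℝ) ∈ Set.Ioo a d) :
    ∃ C : ℝ, 0 < C ∧ ∀ g : ℝ → ℂ, IntegrableOn g (Set.Ioo a d) →
      HnormSq b (fun t =>
          Set.indicator (Set.Ioo a d) (fun s => ∫ t' in (0 : ℝ)..s, g t') t) ≤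
        ENNReal.ofReal (C ^ 2) * (∫⁻ t in Set.Ioo a d, (‖g t‖₊ : ℝ≥0∞)) ^ 2 := by
  obtain ⟨ha, hd⟩ := h0
  -- the fixed constant
  have hKpos : 0 < (d - a) ^ 2 + 1 / π ^ 2 := by positivity
  -- integrability of the majorant
  have hφ : Integrable (fun τ : ℝ => (1 + τ ^ 2) ^ (b - 1)) := by
    have h1 : (1 : ℝ) < 2 * (1 - b) := by linarith
    have := integrable_rpow_neg_one_add_norm_sq (E := ℝ) (μ := volume)
      (r := 2 * (1 - b)) (by simpa using h1)
    refine this.congr (Filter.Eventually.of_forall fun x => ?_)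
    have h2 : -(2 * (1 - b)) / 2 = b - 1 := by ring
    dsimp only
    rw [h2, Real.norm_eq_abs, sq_abs]
  have hJ : 0 ≤ ∫ τ : ℝ, (1 + τ ^ 2) ^ (b - 1) :=
    integral_nonneg fun τ => Real.rpow_nonneg (by positivity) _
  set J : ℝ := ∫ τ : ℝ, (1 + τ ^ 2) ^ (b - 1) with hJdef
  set K : ℝ := (d - a) ^ 2 + 1 / π ^ 2 with hK
  refine ⟨Real.sqrt (K * J + 1), Real.sqrt_pos.2 (by nlinarith), ?_⟩
  intro g hg
  set L : ℝ := ∫ s in Set.Ioo a d, ‖g s‖ with hLdef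
  have hL0 : 0 ≤ L := integral_nonneg fun s => norm_nonneg _
  -- the two Fourier bounds
  have bd1 : ∀ τ : ℝ, ‖𝓕 (fun t => Set.indicator (Set.Ioo a d)
      (fun s => ∫ t' in (0 : ℝ)..s, g t') t) τ‖ ≤ (d - a) * L := by
    intro τ
    apply fourier_norm_le ha hd hg τ (d - a) (by linarith)
    intro u v hu huv hv
    calc ‖∫ t in u..v, EE τ t‖ ≤ |v - u| := EE_int_bound1 τ u v
    _ ≤ d - a := by rw [abs_of_nonneg (by linarith)]; linarith
  have bd2 : ∀ τ : ℝ, τ ≠ 0 → ‖𝓕 (fun t => Set.indicator (Set.Ioo a d)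
      (fun s => ∫ t' in (0 : ℝ)..s, g t') t) τ‖ ≤ (1 / (π * |τ|)) * L := by
    intro τ hτ
    apply fourier_norm_le ha hd hg τ _ (by positivity)
    intro u v _ _ _
    exact EE_int_bound2 hτ u v
  -- pointwise bound on the integrand
  have key : ∀ τ : ℝ, (1 + τ ^ 2) ^ b * ‖𝓕 (fun t => Set.indicator (Set.Ioo a d)
      (fun s => ∫ t' in (0 : ℝ)..s, g t') t) τ‖ ^ 2
      ≤ K * L ^ 2 * (1 + τ ^ 2) ^ (b - 1) := fun τ =>
    key_aux b (d - a) τ _ L (norm_nonneg _) hL0 (bd1 τ) (bd2 τ)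
  -- assemble
  have step : HnormSq b (fun t => Set.indicator (Set.Ioo a d)
      (fun s => ∫ t' in (0 : ℝ)..s, g t') t)
      ≤ ∫⁻ τ : ℝ, ENNReal.ofReal (K * L ^ 2 * (1 + τ ^ 2) ^ (b - 1)) :=
    lintegral_mono fun τ => ENNReal.ofReal_le_ofReal (key τ)
  have hint : Integrable (fun τ : ℝ => K * L ^ 2 * (1 + τ ^ 2) ^ (b - 1)) :=
    hφ.const_mul _
  have heval : (∫⁻ τ : ℝ, ENNReal.ofReal (K * L ^ 2 * (1 + τ ^ 2) ^ (b - 1)))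
      = ENNReal.ofReal (K * L ^ 2 * J) := by
    rw [← MeasureTheory.ofReal_integral_eq_lintegral_ofReal hint
      (Filter.Eventually.of_forall fun τ => by positivity)]
    rw [MeasureTheory.integral_const_mul]
  have hLlint : (∫⁻ t in Set.Ioo a d, (‖g t‖₊ : ℝ≥0∞)) = ENNReal.ofReal L :=
    (MeasureTheory.ofReal_integral_norm_eq_lintegral_enorm hg).symm
  refine (step.trans (le_of_eq heval)).trans ?_
  rw [hLlint, ← ENNReal.ofReal_pow hL0, ← ENNReal.ofReal_mul (by positivity)]
  apply ENNReal.ofReal_le_ofReal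
  have hCsq : Real.sqrt (K * J + 1) ^ 2 = K * J + 1 :=
    Real.sq_sqrt (by nlinarith)
  rw [hCsq]
  nlinarith
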